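/- arXiv:2410.01422 — 2 statements merged into one kernel-verified Lean document; each statement's English description precedes it below -/
import Mathlib

section
/- A nonnegative integer n satisfies v(n) = 1 if and only if n = 11·2^t − 1 or n = 13·2^t − 1 for some nonnegative integer t. -/
/-- The value of a word over the digits `{0,1,2}`, read as a (hyper)binary expansion:
`wordVal (x₀ … x_k) = Σ x_i · 2^(k-i)`. -/
def wordVal : List ℕ → ℕ
  | [] => 0
  | d :: w => d * 2 ^ w.length + wordVal w

/-- `Hyp n` is the set of hyperbinary expansions of `n`: words over `{0,1,2}` with
nonzero leading digit whose value is `n` (the empty word is the unique expansion of `0`). -/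
def Hyp (n : ℕ) : Set (List ℕ) :=
  {w | (∀ d ∈ w, d ≤ 2) ∧ w.head? ≠ some 0 ∧ wordVal w = n}

/-- Single-step reduction of type `→` : `(x02y, x10y)` or `(2y, 10y)`. -/
def StepArrow (a b : List ℕ) : Prop :=
  (∃ x y : List ℕ, a = x ++ 0 :: 2 :: y ∧ b = x ++ 1 :: 0 :: y) ∨
    (∃ y : List ℕ, a = 2 :: y ∧ b = 1 :: 0 :: y)

/-- Single-step reduction of type `↠` : `(x12y, x20y)`. -/
def StepDouble (a b : List ℕ) : Prop :=
  ∃ x y : List ℕ, a = x ++ 1 :: 2 :: y ∧ b = x ++ 2 :: 0 :: y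

/-- A single-step reduction (of either type). -/
def Step (a b : List ℕ) : Prop := StepArrow a b ∨ StepDouble a b

/-- `bFun n` is the number of hyperbinary expansions of `n`. -/
noncomputable def bFun (n : ℕ) : ℕ := (Hyp n).ncard

/-- The set of arcs of the graph `A(n)`: labeled single-step reductions between
hyperbinary expansions of `n`. -/
def arcs (n : ℕ) : Set (List ℕ × List ℕ) :=
  {p | p.1 ∈ Hyp n ∧ p.2 ∈ Hyp n ∧ Step p.1 p.2}

/-- `aFun n` is the number of arcs of `A(n)`. -/
noncomputable def aFun (n : ℕ) : ℕ := (arcs n).ncard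

/-- The cyclomatic number `v(n) = a(n) - b(n) + 1` of the connected graph `A(n)`. -/
noncomputable def vFun (n : ℕ) : ℕ := aFun n + 1 - bFun n




lemma wordVal_concat (u : List ℕ) (d : ℕ) : wordVal (u ++ [d]) = 2 * wordVal u + d := by
  induction u with
  | nil => simp [wordVal]
  | cons e u ih =>
    have h : ((e :: u) ++ [d]) = e :: (u ++ [d]) := rfl
    rw [h]
    show e * 2 ^ (u ++ [d]).length + wordVal (u ++ [d]) = 2 * (e * 2 ^ u.length + wordVal u) + d
    rw [List.length_append, ih]
    simp [wordVal, pow_succ]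
    ring

lemma hyp_zero : Hyp 0 = {[]} := by
  ext w
  constructor
  · rintro ⟨h1, h2, h3⟩
    cases w with
    | nil => rfl
    | cons d u =>
      exfalso
      simp only [wordVal] at h3
      have h4 : d * 2 ^ u.length = 0 := by omega
      have h5 : (0:ℕ) < 2 ^ u.length := by positivity
      have hd : d = 0 := by
        rcases Nat.mul_eq_zero.1 h4 with h | h
        · exact h
        · omega
      subst hd
      simp at h2
  · rintro rfl
    exact ⟨by simp, by simp, rfl⟩

lemma mem_hyp_ne_nil {n : ℕ} (hn : n ≠ 0) {w : List ℕ} (hw : w ∈ Hyp n) : w ≠ [] := by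
  rintro rfl
  exact hn hw.2.2.symm

lemma head?_concat (u : List ℕ) (d : ℕ) (h2 : d ≠ 0) : (u ++ [d]).head? ≠ some 0 ↔ u.head? ≠ some 0 := by
  cases u with
  | nil => simp [h2]
  | cons e u => simp

lemma concat_inj {u v : List ℕ} {c d : ℕ} (h : u ++ [c] = v ++ [d]) : u = v ∧ c = d :=
  ⟨(List.append_inj' h rfl).1, by simpa using (List.append_inj' h rfl).2⟩


lemma mem_hyp_concat_elim {n : ℕ} {u : List ℕ} {d : ℕ} (hw : u ++ [d] ∈ Hyp n) :
    (∀ e ∈ u, e ≤ 2) ∧ d ≤ 2 ∧ u.head? ≠ some 0 ∧ 2 * wordVal u + d = n := by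
  obtain ⟨h1, h2, h3⟩ := hw
  rw [wordVal_concat] at h3
  refine ⟨fun e he => h1 e (by simp [he]), h1 d (by simp), ?_, h3⟩
  cases u with
  | nil => simp
  | cons e u => rw [List.head?_append_of_ne_nil _ (by simp)] at h2; exact h2

lemma mem_hyp_concat_intro {n : ℕ} {u : List ℕ} {d : ℕ} (hd : d ≠ 0 ∨ u ≠ [])
    (h1 : ∀ e ∈ u, e ≤ 2) (h2 : d ≤ 2) (h3 : u.head? ≠ some 0) (h4 : 2 * wordVal u + d = n) :
    u ++ [d] ∈ Hyp n := by
  refine ⟨?_, ?_, by rw [wordVal_concat]; exact h4⟩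
  · intro e he; simp at he; rcases he with he | he; exacts [h1 e he, he ▸ h2]
  · cases u with
    | nil =>
      simp only [List.nil_append]
      rcases hd with hd | hd
      · simpa using fun h => hd h
      · simp at hd
    | cons e u => rw [List.head?_append_of_ne_nil _ (by simp)]; simpa using h3

lemma hyp_odd (m : ℕ) : Hyp (2*m+1) = (· ++ [1]) '' Hyp m := by
  ext w
  constructor
  · rintro hw
    have hne : w ≠ [] := mem_hyp_ne_nil (by omega) hw
    rcases List.eq_nil_or_concat w with rfl | ⟨u, d, rfl⟩
    · exact absurd rfl hne
    · rw [List.concat_eq_append] at hw ⊢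
      have h := mem_hyp_concat_elim hw
      have hd1 : d = 1 := by omega
      subst hd1
      exact ⟨u, ⟨h.1, h.2.2.1, by omega⟩, rfl⟩
  · rintro ⟨u, ⟨h1, h2, h3⟩, rfl⟩
    exact mem_hyp_concat_intro (Or.inl one_ne_zero) h1 (by omega) h2 (by omega)

lemma hyp_even (m : ℕ) : Hyp (2*m+2) = (· ++ [0]) '' Hyp (m+1) ∪ (· ++ [2]) '' Hyp m := by
  ext w
  constructor
  · rintro hw
    have hne : w ≠ [] := mem_hyp_ne_nil (by omega) hw
    rcases List.eq_nil_or_concat w with rfl | ⟨u, d, rfl⟩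
    · exact absurd rfl hne
    · rw [List.concat_eq_append] at hw ⊢
      have h := mem_hyp_concat_elim hw
      have hd : d = 0 ∨ d = 2 := by omega
      rcases hd with rfl | rfl
      · exact Or.inl ⟨u, ⟨h.1, h.2.2.1, by omega⟩, rfl⟩
      · exact Or.inr ⟨u, ⟨h.1, h.2.2.1, by omega⟩, rfl⟩
  · rintro (⟨u, ⟨h1, h2, h3⟩, rfl⟩ | ⟨u, ⟨h1, h2, h3⟩, rfl⟩)
    · refine mem_hyp_concat_intro (Or.inr ?_) h1 (by omega) h2 (by omega)
      rintro rfl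
      simp [wordVal] at h3
    · exact mem_hyp_concat_intro (Or.inl two_ne_zero) h1 (by omega) h2 (by omega)


lemma hyp_finite (n : ℕ) : (Hyp n).Finite := by
  induction n using Nat.strong_induction_on with
  | _ n ih =>
    match n with
    | 0 => rw [hyp_zero]; exact Set.finite_singleton _
    | 1 =>
      have h := hyp_odd 0
      norm_num at h
      rw [h]
      exact (ih 0 (by omega)).image _
    | (n+2) =>
      rcases Nat.even_or_odd n with ⟨m, hm⟩ | ⟨m, hm⟩
      · have : n + 2 = 2*m+2 := by omega
        rw [this, hyp_even]
        exact ((ih (m+1) (by omega)).image _).union ((ih m (by omega)).image _)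
      · have : n + 2 = 2*(m+1)+1 := by omega
        rw [this, hyp_odd]
        exact (ih (m+1) (by omega)).image _

lemma concat_injective (d : ℕ) : Function.Injective (· ++ [d] : List ℕ → List ℕ) := by
  intro u v h
  exact (concat_inj h).1


lemma bFun_zero : bFun 0 = 1 := by
  rw [bFun, hyp_zero, Set.ncard_singleton]

lemma bFun_odd (m : ℕ) : bFun (2*m+1) = bFun m := by
  rw [bFun, hyp_odd, Set.ncard_image_of_injective _ (concat_injective 1)]
  rfl

lemma bFun_even (m : ℕ) : bFun (2*m+2) = bFun (m+1) + bFun m := by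
  rw [bFun, hyp_even]
  rw [Set.ncard_union_eq ?dis (((hyp_finite (m+1)).image _)) ((hyp_finite m).image _),
    Set.ncard_image_of_injective _ (concat_injective 0),
    Set.ncard_image_of_injective _ (concat_injective 2)]
  · rfl
  case dis =>
    rw [Set.disjoint_left]
    rintro w ⟨u, _, rfl⟩ ⟨v, _, hv⟩
    have := (concat_inj hv).2
    omega




lemma step_concat {u v : List ℕ} (h : Step u v) (d : ℕ) : Step (u ++ [d]) (v ++ [d]) := by
  rcases h with (⟨x, y, rfl, rfl⟩ | ⟨y, rfl, rfl⟩) | ⟨x, y, rfl, rfl⟩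
  · exact Or.inl (Or.inl ⟨x, y ++ [d], by simp, by simp⟩)
  · exact Or.inl (Or.inr ⟨y ++ [d], by simp, by simp⟩)
  · exact Or.inr ⟨x, y ++ [d], by simp, by simp⟩

lemma step_concat_cases {u v : List ℕ} {c d : ℕ} (h : Step (u ++ [c]) (v ++ [d])) :
    (c = d ∧ Step u v) ∨
      (c = 2 ∧ d = 0 ∧ ((∃ x, u = x ++ [0] ∧ v = x ++ [1]) ∨ (u = [] ∧ v = [1]) ∨
        (∃ x, u = x ++ [1] ∧ v = x ++ [2]))) := by
  rcases h with (⟨x, y, ha, hb⟩ | ⟨y, ha, hb⟩) | ⟨x, y, ha, hb⟩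
  · rcases List.eq_nil_or_concat y with rfl | ⟨y', e, rfl⟩
    · have h1 : u = x ++ [0] ∧ c = 2 := concat_inj (by simpa using ha)
      have h2 : v = x ++ [1] ∧ d = 0 := concat_inj (by simpa using hb)
      exact Or.inr ⟨h1.2, h2.2, Or.inl ⟨x, h1.1, h2.1⟩⟩
    · rw [List.concat_eq_append] at ha hb
      have h1 : u = x ++ 0 :: 2 :: y' ∧ c = e := concat_inj (by rw [ha]; simp)
      have h2 : v = x ++ 1 :: 0 :: y' ∧ d = e := concat_inj (by rw [hb]; simp)
      exact Or.inl ⟨by omega, Or.inl (Or.inl ⟨x, y', h1.1, h2.1⟩)⟩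
  · rcases List.eq_nil_or_concat y with rfl | ⟨y', e, rfl⟩
    · have h1 : u = ([] : List ℕ) ∧ c = 2 := concat_inj (by simpa using ha)
      have h2 : v = [1] ∧ d = 0 := concat_inj (by simpa using hb)
      exact Or.inr ⟨h1.2, h2.2, Or.inr (Or.inl ⟨h1.1, h2.1⟩)⟩
    · rw [List.concat_eq_append] at ha hb
      have h1 : u = 2 :: y' ∧ c = e := concat_inj (by rw [ha]; simp)
      have h2 : v = 1 :: 0 :: y' ∧ d = e := concat_inj (by rw [hb]; simp)
      exact Or.inl ⟨by omega, Or.inl (Or.inr ⟨y', h1.1, h2.1⟩)⟩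
  · rcases List.eq_nil_or_concat y with rfl | ⟨y', e, rfl⟩
    · have h1 : u = x ++ [1] ∧ c = 2 := concat_inj (by simpa using ha)
      have h2 : v = x ++ [2] ∧ d = 0 := concat_inj (by simpa using hb)
      exact Or.inr ⟨h1.2, h2.2, Or.inr (Or.inr ⟨x, h1.1, h2.1⟩)⟩
    · rw [List.concat_eq_append] at ha hb
      have h1 : u = x ++ 1 :: 2 :: y' ∧ c = e := concat_inj (by rw [ha]; simp)
      have h2 : v = x ++ 2 :: 0 :: y' ∧ d = e := concat_inj (by rw [hb]; simp)
      exact Or.inl ⟨by omega, Or.inr ⟨x, y', h1.1, h2.1⟩⟩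



lemma arcs_finite (n : ℕ) : (arcs n).Finite := by
  have : arcs n ⊆ (Hyp n) ×ˢ (Hyp n) := fun p hp => ⟨hp.1, hp.2.1⟩
  exact Set.Finite.subset ((hyp_finite n).prod (hyp_finite n)) this

lemma step_ne_nil {a b : List ℕ} (h : Step a b) : a ≠ [] := by
  rcases h with (⟨x, y, rfl, _⟩ | ⟨y, rfl, _⟩) | ⟨x, y, rfl, _⟩ <;> simp

lemma arcs_zero : arcs 0 = ∅ := by
  ext p
  simp only [arcs, Set.mem_setOf_eq, Set.mem_empty_iff_false, iff_false]
  rintro ⟨h1, h2, h3⟩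
  rw [hyp_zero] at h1
  exact step_ne_nil h3 h1

def pairConcat (d : ℕ) : List ℕ × List ℕ → List ℕ × List ℕ := fun p => (p.1 ++ [d], p.2 ++ [d])

lemma pairConcat_injective (d : ℕ) : Function.Injective (pairConcat d) := by
  rintro ⟨a, b⟩ ⟨c, e⟩ h
  simp only [pairConcat, Prod.mk.injEq] at h
  exact Prod.ext ((concat_inj h.1).1) ((concat_inj h.2).1)

lemma arcs_odd (m : ℕ) : arcs (2*m+1) = pairConcat 1 '' arcs m := by
  ext ⟨a, b⟩
  constructor
  · rintro ⟨h1, h2, h3⟩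
    rw [hyp_odd] at h1 h2
    obtain ⟨u, hu, rfl⟩ := h1
    obtain ⟨v, hv, rfl⟩ := h2
    simp only at h3
    rcases step_concat_cases h3 with ⟨-, hs⟩ | ⟨hc, hd, -⟩
    · exact ⟨(u, v), ⟨hu, hv, hs⟩, rfl⟩
    · omega
  · rintro ⟨⟨u, v⟩, ⟨hu, hv, hs⟩, h⟩
    rw [← h]
    simp only [pairConcat]
    refine ⟨?_, ?_, step_concat hs 1⟩
    · rw [hyp_odd]; exact ⟨u, hu, rfl⟩
    · rw [hyp_odd]; exact ⟨v, hv, rfl⟩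

lemma aFun_zero : aFun 0 = 0 := by rw [aFun, arcs_zero, Set.ncard_empty]

lemma aFun_odd (m : ℕ) : aFun (2*m+1) = aFun m := by
  rw [aFun, arcs_odd, Set.ncard_image_of_injective _ (pairConcat_injective 1)]
  rfl

def cross (m : ℕ) : Set (List ℕ × List ℕ) :=
  {p | p ∈ arcs (2*m+2) ∧ ∃ u v : List ℕ, p.1 = u ++ [2] ∧ p.2 = v ++ [0]}

lemma hyp_concat2_iff {n : ℕ} (x : List ℕ) (c d : ℕ) (hc : c ≤ 2) (hd : d ≤ 2) :
    x ++ [c, d] ∈ Hyp n ↔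
      ((∀ e ∈ x, e ≤ 2) ∧ (x ++ [c]).head? ≠ some 0 ∧ 4 * wordVal x + 2*c + d = n) := by
  have hx : x ++ [c, d] = (x ++ [c]) ++ [d] := by simp
  rw [hx]
  constructor
  · intro hw
    have h := mem_hyp_concat_elim hw
    have hv := h.2.2.2
    rw [wordVal_concat] at hv
    refine ⟨fun e he => h.1 e (by simp [he]), ?_, by omega⟩
    have := hw.2.1
    rwa [List.head?_append_of_ne_nil _ (by simp)] at this
  · rintro ⟨h1, h2, h3⟩
    refine mem_hyp_concat_intro (Or.inr (by simp)) ?_ hd ?_ ?_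
    · intro e he; simp at he; rcases he with he | he; exacts [h1 e he, he ▸ hc]
    · cases x with
      | nil => simpa using h2
      | cons f x =>
        rw [List.head?_append_of_ne_nil _ (by simp)] at h2
        simpa using h2
    · rw [wordVal_concat]; omega

lemma hyp_nil_head {x : List ℕ} (h : (x ++ [0]).head? ≠ some 0) : x ≠ [] ∧ x.head? ≠ some 0 := by
  cases x with
  | nil => simp at h
  | cons e x =>
    rw [List.head?_append_of_ne_nil _ (by simp)] at h
    exact ⟨by simp, h⟩

lemma step_cross_cases {u v : List ℕ} {n : ℕ} (h1 : u ++ [2] ∈ Hyp n) (h2 : v ++ [0] ∈ Hyp n)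
    (hs : Step (u ++ [2]) (v ++ [0])) :
    (∃ x, x ∈ Hyp ((n-2)/4) ∧ n % 4 = 2 ∧ n ≠ 2 ∧ u = x ++ [0] ∧ v = x ++ [1]) ∨
    (n = 2 ∧ u = [] ∧ v = [1]) ∨
    (∃ x, x ∈ Hyp ((n-4)/4) ∧ n % 4 = 0 ∧ n ≠ 0 ∧ u = x ++ [1] ∧ v = x ++ [2]) := by
  rcases step_concat_cases hs with ⟨h, -⟩ | ⟨-, -, ⟨x, rfl, rfl⟩ | ⟨rfl, rfl⟩ | ⟨x, rfl, rfl⟩⟩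
  · omega
  · -- arrow at tail
    left
    have hx : (x ++ [0]) ++ [2] = x ++ [0, 2] := by simp
    rw [hx, hyp_concat2_iff x 0 2 (by omega) (by omega)] at h1
    obtain ⟨hd, hh, hv⟩ := h1
    obtain ⟨hne, hh'⟩ := hyp_nil_head hh
    have hx0 : wordVal x = (n-2)/4 := by omega
    refine ⟨x, ⟨hd, hh', hx0⟩, by omega, ?_, rfl, rfl⟩
    intro hn2
    subst hn2
    have : wordVal x = 0 := by omega
    have : x ∈ Hyp 0 := ⟨hd, hh', this⟩
    rw [hyp_zero] at this
    exact hne this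
  · -- prefix arrow
    right; left
    have : ([] : List ℕ) ++ [2] = [2] := rfl
    refine ⟨?_, rfl, rfl⟩
    have hv := h1.2.2
    simp [wordVal] at hv
    omega
  · -- double at tail
    right; right
    have hx : (x ++ [1]) ++ [2] = x ++ [1, 2] := by simp
    rw [hx, hyp_concat2_iff x 1 2 (by omega) (by omega)] at h1
    obtain ⟨hd, hh, hv⟩ := h1
    have hh' : x.head? ≠ some 0 := by
      cases x with
      | nil => simp
      | cons e x => rw [List.head?_append_of_ne_nil _ (by simp)] at hh; exact hh
    exact ⟨x, ⟨hd, hh', by omega⟩, by omega, by omega, rfl, rfl⟩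

lemma cross_zero : cross 0 = {([2], [1, 0])} := by
  ext ⟨a, b⟩
  constructor
  · rintro ⟨⟨h1, h2, hs⟩, u, v, ha, hb⟩
    simp only at ha hb
    subst ha; subst hb
    rcases step_cross_cases h1 h2 hs with ⟨x, _, h4, _⟩ | ⟨_, rfl, rfl⟩ | ⟨x, _, h4, _⟩
    · omega
    · rfl
    · omega
  · rintro h
    rw [Set.mem_singleton_iff] at h
    rw [h]
    refine ⟨⟨⟨by simp, by simp, by simp [wordVal]⟩, ⟨?_, by simp, by simp [wordVal]⟩,
      Or.inl (Or.inr ⟨[], rfl, rfl⟩)⟩, [], [1], rfl, rfl⟩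
    intro e he
    simp at he
    omega

lemma cross_even (k : ℕ) (hk : k ≠ 0) :
    cross (2*k) = (fun x => (x ++ [0, 2], x ++ [1, 0])) '' Hyp k := by
  have hn : 2*(2*k)+2 = 4*k+2 := by ring
  ext ⟨a, b⟩
  constructor
  · rintro ⟨⟨h1, h2, hs⟩, u, v, ha, hb⟩
    simp only at ha hb
    subst ha; subst hb
    rcases step_cross_cases h1 h2 hs with ⟨x, hx, h4, _, rfl, rfl⟩ | ⟨h4, rfl, rfl⟩ |
      ⟨x, hx, h4, _, rfl, rfl⟩
    · refine ⟨x, by convert hx using 2; omega, by simp⟩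
    · omega
    · omega
  · rintro ⟨x, hx, h⟩
    simp only [Prod.mk.injEq] at h
    obtain ⟨rfl, rfl⟩ := h
    have hne : x ≠ [] := mem_hyp_ne_nil hk hx
    obtain ⟨hd, hh, hv⟩ := hx
    have h1 : x ++ [0, 2] ∈ Hyp (2*(2*k)+2) := by
      rw [hyp_concat2_iff x 0 2 (by omega) (by omega)]
      refine ⟨hd, ?_, by omega⟩
      rw [List.head?_append_of_ne_nil _ (by simpa using hne)]
      exact hh
    have h2 : x ++ [1, 0] ∈ Hyp (2*(2*k)+2) := by
      rw [hyp_concat2_iff x 1 0 (by omega) (by omega)]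
      refine ⟨hd, ?_, by omega⟩
      rw [List.head?_append_of_ne_nil _ (by simpa using hne)]
      exact hh
    exact ⟨⟨h1, h2, Or.inl (Or.inl ⟨x, [], rfl, rfl⟩)⟩, x ++ [0], x ++ [1], by simp, by simp⟩

lemma cross_odd (k : ℕ) :
    cross (2*k+1) = (fun x => (x ++ [1, 2], x ++ [2, 0])) '' Hyp k := by
  ext ⟨a, b⟩
  constructor
  · rintro ⟨⟨h1, h2, hs⟩, u, v, ha, hb⟩
    simp only at ha hb
    subst ha; subst hb
    rcases step_cross_cases h1 h2 hs with ⟨x, hx, h4, _, rfl, rfl⟩ | ⟨h4, rfl, rfl⟩ |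
      ⟨x, hx, h4, _, rfl, rfl⟩
    · omega
    · omega
    · refine ⟨x, by convert hx using 2; omega, by simp⟩
  · rintro ⟨x, hx, h⟩
    simp only [Prod.mk.injEq] at h
    obtain ⟨rfl, rfl⟩ := h
    obtain ⟨hd, hh, hv⟩ := hx
    have hh1 : ∀ c : ℕ, c ≠ 0 → (x ++ [c]).head? ≠ some 0 := by
      intro c hc
      exact (head?_concat x c hc).2 hh
    have h1 : x ++ [1, 2] ∈ Hyp (2*(2*k+1)+2) := by
      rw [hyp_concat2_iff x 1 2 (by omega) (by omega)]
      exact ⟨hd, hh1 1 one_ne_zero, by omega⟩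
    have h2 : x ++ [2, 0] ∈ Hyp (2*(2*k+1)+2) := by
      rw [hyp_concat2_iff x 2 0 (by omega) (by omega)]
      exact ⟨hd, hh1 2 two_ne_zero, by omega⟩
    exact ⟨⟨h1, h2, Or.inr ⟨x, [], rfl, rfl⟩⟩, x ++ [1], x ++ [2], by simp, by simp⟩

lemma concat2_injective (c d : ℕ) : Function.Injective (fun x : List ℕ => x ++ [c, d]) := by
  intro x y h
  simp only at h
  have hx : ∀ z : List ℕ, z ++ [c, d] = (z ++ [c]) ++ [d] := by intro z; simp
  rw [hx, hx] at h
  exact (concat_inj (concat_inj h).1).1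

lemma cross_ncard (m : ℕ) : (cross m).ncard = bFun (m / 2) := by
  rcases Nat.even_or_odd m with ⟨k, hk⟩ | ⟨k, hk⟩
  · rcases Nat.eq_zero_or_pos k with rfl | hpos
    · have : m = 0 := by omega
      rw [this, cross_zero, Set.ncard_singleton, bFun_zero]
    · have hm : m = 2*k := by omega
      rw [hm, cross_even k (by omega)]
      have inj : Function.Injective (fun x : List ℕ => (x ++ [0, 2], x ++ [1, 0])) := by
        intro x y h
        simp only [Prod.mk.injEq] at h
        exact concat2_injective 0 2 h.1
      rw [Set.ncard_image_of_injective _ inj]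
      have : 2*k/2 = k := by omega
      rw [this]
      rfl
  · have hm : m = 2*k+1 := by omega
    rw [hm, cross_odd k]
    have inj : Function.Injective (fun x : List ℕ => (x ++ [1, 2], x ++ [2, 0])) := by
      intro x y h
      simp only [Prod.mk.injEq] at h
      exact concat2_injective 1 2 h.1
    rw [Set.ncard_image_of_injective _ inj]
    have : (2*k+1)/2 = k := by omega
    rw [this]
    rfl

lemma arcs_even (m : ℕ) :
    arcs (2*m+2) = pairConcat 0 '' arcs (m+1) ∪ pairConcat 2 '' arcs m ∪ cross m := by
  ext ⟨a, b⟩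
  constructor
  · rintro ⟨h1, h2, hs⟩
    have h1' := h1
    have h2' := h2
    have he : 2*m+2 = 2*m+2 := rfl
    rw [hyp_even] at h1' h2'
    rcases h1' with ⟨u, hu, rfl⟩ | ⟨u, hu, rfl⟩ <;> rcases h2' with ⟨v, hv, rfl⟩ | ⟨v, hv, rfl⟩
    · -- 0 / 0
      rcases step_concat_cases hs with ⟨-, hsuv⟩ | ⟨hc, -, -⟩
      · exact Or.inl (Or.inl ⟨(u, v), ⟨hu, hv, hsuv⟩, rfl⟩)
      · omega
    · -- 0 / 2 : impossible
      rcases step_concat_cases hs with ⟨hcd, -⟩ | ⟨hc, -, -⟩ <;> omega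
    · -- 2 / 0 : cross
      exact Or.inr ⟨⟨h1, h2, hs⟩, u, v, rfl, rfl⟩
    · -- 2 / 2
      rcases step_concat_cases hs with ⟨-, hsuv⟩ | ⟨-, hd, -⟩
      · exact Or.inl (Or.inr ⟨(u, v), ⟨hu, hv, hsuv⟩, rfl⟩)
      · omega
  · rintro ((⟨⟨u, v⟩, ⟨hu, hv, hsuv⟩, h⟩ | ⟨⟨u, v⟩, ⟨hu, hv, hsuv⟩, h⟩) | hc)
    · rw [← h]
      simp only [pairConcat]
      refine ⟨?_, ?_, step_concat hsuv 0⟩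
      · rw [hyp_even]; exact Or.inl ⟨u, hu, rfl⟩
      · rw [hyp_even]; exact Or.inl ⟨v, hv, rfl⟩
    · rw [← h]
      simp only [pairConcat]
      refine ⟨?_, ?_, step_concat hsuv 2⟩
      · rw [hyp_even]; exact Or.inr ⟨u, hu, rfl⟩
      · rw [hyp_even]; exact Or.inr ⟨v, hv, rfl⟩
    · exact hc.1

lemma aFun_even (m : ℕ) : aFun (2*m+2) = aFun (m+1) + aFun m + bFun (m/2) := by
  rw [aFun, arcs_even]
  have f0 : (pairConcat 0 '' arcs (m+1)).Finite := (arcs_finite (m+1)).image _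
  have f2 : (pairConcat 2 '' arcs m).Finite := (arcs_finite m).image _
  have fc : (cross m).Finite := (arcs_finite (2*m+2)).subset (fun p hp => hp.1)
  have d02 : Disjoint (pairConcat 0 '' arcs (m+1)) (pairConcat 2 '' arcs m) := by
    rw [Set.disjoint_left]
    rintro ⟨a, b⟩ ⟨⟨u, v⟩, -, h⟩ ⟨⟨u', v'⟩, -, h'⟩
    simp only [pairConcat, Prod.mk.injEq] at h h'
    have := (concat_inj (h.1.trans h'.1.symm)).2
    omega
  have dc : Disjoint (pairConcat 0 '' arcs (m+1) ∪ pairConcat 2 '' arcs m) (cross m) := by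
    rw [Set.disjoint_left]
    rintro ⟨a, b⟩ (⟨⟨u, v⟩, -, h⟩ | ⟨⟨u, v⟩, -, h⟩) ⟨-, u', v', ha, hb⟩ <;>
      simp only [pairConcat, Prod.mk.injEq] at h ha hb
    · have := (concat_inj (h.1.trans ha)).2
      omega
    · have := (concat_inj (h.2.trans hb)).2
      omega
  rw [Set.ncard_union_eq dc (f0.union f2) fc, Set.ncard_union_eq d02 f0 f2,
    Set.ncard_image_of_injective _ (pairConcat_injective 0),
    Set.ncard_image_of_injective _ (pairConcat_injective 2), cross_ncard]
  rfl

noncomputable def gz (n : ℕ) : ℤ := (aFun n : ℤ) + 1 - bFun n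

lemma bFun_pos (n : ℕ) : 0 < bFun n := by
  induction n using Nat.strong_induction_on with
  | _ n ih =>
    match n with
    | 0 => rw [bFun_zero]; omega
    | (n+1) =>
      rcases Nat.even_or_odd n with ⟨m, hm⟩ | ⟨m, hm⟩
      · have hn : n+1 = 2*m+1 := by omega
        rw [hn, bFun_odd]
        exact ih m (by omega)
      · have hn : n+1 = 2*m+2 := by omega
        rw [hn, bFun_even]
        have := ih m (by omega)
        omega

lemma gz_odd (m : ℕ) : gz (2*m+1) = gz m := by
  rw [gz, gz, aFun_odd, bFun_odd]

lemma gz_even (m : ℕ) : gz (2*m+2) = gz (m+1) + gz m + (bFun (m/2) - 1) := by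
  rw [gz, gz, gz, aFun_even, bFun_even]
  push_cast
  ring

lemma gz_nonneg (n : ℕ) : 0 ≤ gz n := by
  induction n using Nat.strong_induction_on with
  | _ n ih =>
    match n with
    | 0 => simp [gz, aFun_zero, bFun_zero]
    | (n+1) =>
      rcases Nat.even_or_odd n with ⟨m, hm⟩ | ⟨m, hm⟩
      · have hn : n+1 = 2*m+1 := by omega
        rw [hn, gz_odd]
        exact ih m (by omega)
      · have hn : n+1 = 2*m+2 := by omega
        rw [hn, gz_even]
        have h1 := ih m (by omega)
        have h2 := ih (m+1) (by omega)
        have h3 := bFun_pos (m/2)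
        have : (1 : ℤ) ≤ (bFun (m/2) : ℤ) := by exact_mod_cast h3
        omega

lemma bFun_one : bFun 1 = 1 := by
  have := bFun_odd 0
  norm_num at this
  rw [this, bFun_zero]

lemma bFun_two : bFun 2 = 2 := by
  have := bFun_even 0
  norm_num at this
  rw [this, bFun_one, bFun_zero]

lemma bFun_eq_one (n : ℕ) : bFun n = 1 ↔ ∃ j : ℕ, n = 2^j - 1 := by
  induction n using Nat.strong_induction_on with
  | _ n ih =>
    match n with
    | 0 => simp [bFun_zero]; exact ⟨0, by norm_num⟩
    | (n+1) =>
      rcases Nat.even_or_odd n with ⟨m, hm⟩ | ⟨m, hm⟩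
      · have hn : n+1 = 2*m+1 := by omega
        rw [hn, bFun_odd, ih m (by omega)]
        constructor
        · rintro ⟨j, rfl⟩
          refine ⟨j+1, ?_⟩
          have : 1 ≤ 2^j := Nat.one_le_two_pow
          rw [pow_succ]
          omega
        · rintro ⟨j, hj⟩
          match j with
          | 0 => simp at hj; try omega
          | (j+1) =>
            refine ⟨j, ?_⟩
            have : 1 ≤ 2^j := Nat.one_le_two_pow
            rw [pow_succ] at hj
            omega
      · have hn : n+1 = 2*m+2 := by omega
        rw [hn, bFun_even]
        have h1 := bFun_pos m
        have h2 := bFun_pos (m+1)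
        constructor
        · intro h; omega
        · rintro ⟨j, hj⟩
          exfalso
          match j with
          | 0 => simp at hj; try omega
          | (j+1) =>
            have : 1 ≤ 2^j := Nat.one_le_two_pow
            rw [pow_succ] at hj
            omega

lemma bFun_eq_two (n : ℕ) : bFun n = 2 ↔ ∃ j : ℕ, n = 3*2^j - 1 := by
  induction n using Nat.strong_induction_on with
  | _ n ih =>
    match n with
    | 0 =>
      rw [bFun_zero]
      constructor
      · omega
      · rintro ⟨j, hj⟩
        have : 1 ≤ 2^j := Nat.one_le_two_pow
        omega
    | (n+1) =>
      rcases Nat.even_or_odd n with ⟨m, hm⟩ | ⟨m, hm⟩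
      · have hn : n+1 = 2*m+1 := by omega
        rw [hn, bFun_odd, ih m (by omega)]
        constructor
        · rintro ⟨j, hj⟩
          refine ⟨j+1, ?_⟩
          have : 1 ≤ 2^j := Nat.one_le_two_pow
          rw [pow_succ]
          omega
        · rintro ⟨j, hj⟩
          match j with
          | 0 => simp at hj; try omega
          | (j+1) =>
            refine ⟨j, ?_⟩
            have : 1 ≤ 2^j := Nat.one_le_two_pow
            rw [pow_succ] at hj
            omega
      · have hn : n+1 = 2*m+2 := by omega
        rw [hn, bFun_even]
        constructor
        · intro h
          have h1 := bFun_pos m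
          have h2 := bFun_pos (m+1)
          have hm1 : bFun (m+1) = 1 := by omega
          have hm0 : bFun m = 1 := by omega
          obtain ⟨i, hi⟩ := (bFun_eq_one (m+1)).1 hm1
          obtain ⟨j, hj⟩ := (bFun_eq_one m).1 hm0
          have hi1 : 1 ≤ 2^i := Nat.one_le_two_pow
          have hj1 : 1 ≤ 2^j := Nat.one_le_two_pow
          -- 2^i = 2^j + 1, so j = 0, i = 1, m = 0
          have hij : 2^i = 2^j + 1 := by omega
          have hj0 : j = 0 := by
            by_contra hj0
            have : 2 ∣ 2^j := dvd_pow_self 2 hj0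
            have : 2 ∣ 2^i := by
              rcases Nat.eq_zero_or_pos i with rfl | hi0
              · simp at hij; try omega
              · exact dvd_pow_self 2 hi0.ne'
            omega
          subst hj0
          simp at hj
          subst hj
          exact ⟨0, by norm_num⟩
        · rintro ⟨j, hj⟩
          match j with
          | 0 =>
            norm_num at hj
            have hm0 : m = 0 := by omega
            subst hm0
            rw [bFun_one, bFun_zero]
          | (j+1) =>
            exfalso
            have : 1 ≤ 2^j := Nat.one_le_two_pow
            rw [pow_succ] at hj
            omega

lemma gz_zero : gz 0 = 0 := by simp [gz, aFun_zero, bFun_zero]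

lemma gz_one : gz 1 = 0 := by
  have := gz_odd 0; norm_num at this; rw [this, gz_zero]

lemma gz_two : gz 2 = 0 := by
  have := gz_even 0; norm_num at this; rw [this, gz_one, gz_zero, bFun_zero]; norm_num

lemma gz_three_pow (j : ℕ) : gz (3*2^j - 1) = 0 := by
  induction j with
  | zero => norm_num; exact gz_two
  | succ j ih =>
    have h1 : 1 ≤ 2^j := Nat.one_le_two_pow
    have h : 3*2^(j+1) - 1 = 2*(3*2^j - 1) + 1 := by rw [pow_succ]; omega
    rw [h, gz_odd, ih]

lemma bFun_three_pow (j : ℕ) : bFun (3*2^j - 1) = 2 := by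
  rw [bFun_eq_two]
  exact ⟨j, rfl⟩

lemma gz_six_sub_two (j : ℕ) : 1 ≤ gz (6*2^(j+1) - 2) := by
  have h1 : 1 ≤ 2^j := Nat.one_le_two_pow
  have h : 6*2^(j+1) - 2 = 2*(3*2^(j+1) - 2) + 2 := by rw [pow_succ]; omega
  rw [h, gz_even]
  have e1 : 3*2^(j+1) - 2 + 1 = 3*2^(j+1) - 1 := by rw [pow_succ]; omega
  have e2 : (3*2^(j+1) - 2)/2 = 3*2^j - 1 := by rw [pow_succ]; omega
  rw [e1, e2, gz_three_pow, bFun_three_pow]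
  have := gz_nonneg (3*2^(j+1) - 2)
  omega

lemma gz_six (j : ℕ) : 1 ≤ gz (6*2^(j+1)) := by
  have h1 : 1 ≤ 2^j := Nat.one_le_two_pow
  have h : 6*2^(j+1) = 2*(3*2^(j+1) - 1) + 2 := by rw [pow_succ]; omega
  rw [h, gz_even]
  have e1 : 3*2^(j+1) - 1 + 1 = 3*2^(j+1) := by rw [pow_succ]; omega
  have e2 : (3*2^(j+1) - 1)/2 = 3*2^j - 1 := by rw [pow_succ]; omega
  rw [e1, e2, gz_three_pow, bFun_three_pow]
  have := gz_nonneg (3*2^(j+1))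
  omega

lemma gz_four : gz 4 = 0 := by
  have := gz_even 1; norm_num at this
  rw [this, gz_two, gz_one, bFun_zero]
  norm_num

lemma gz_five : gz 5 = 0 := by
  have := gz_odd 2; norm_num at this; rw [this, gz_two]

lemma gz_six' : gz 6 = 0 := by
  have := gz_even 2; norm_num at this
  have h3 : gz 3 = 0 := by have := gz_odd 1; norm_num at this; rw [this, gz_one]
  rw [this, h3, gz_two, bFun_one]
  norm_num

lemma gz_ten : gz 10 = 1 := by
  have := gz_even 4; norm_num at this
  rw [this, gz_five, gz_four, bFun_two]
  norm_num

lemma gz_twelve : gz 12 = 1 := by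
  have := gz_even 5; norm_num at this
  rw [this, gz_six', gz_five, bFun_two]
  norm_num

lemma aux_pow2 (s : ℕ) : 2^s = 1 ∨ 2^s = 2 ∨ 2^s = 4 ∨ 2^s = 8 ∨ 16 ≤ 2^s := by
  rcases le_or_gt s 3 with h | h
  · interval_cases s <;> norm_num
  · right; right; right; right
    calc (16:ℕ) = 2^4 := by norm_num
    _ ≤ 2^s := Nat.pow_le_pow_right (by norm_num) h

lemma not_c_pow {c : ℕ} (hc : c = 11 ∨ c = 13) (t s : ℕ) : c * 2^t ≠ 2^s := by
  intro h
  have hp : Nat.Prime c := by rcases hc with rfl | rfl <;> norm_num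
  have hd : c ∣ 2^s := h ▸ dvd_mul_right c (2^t)
  have h2 := hp.dvd_of_dvd_pow hd
  have := Nat.le_of_dvd (by norm_num) h2
  omega

lemma not_c_succ {c : ℕ} (hc : c = 11 ∨ c = 13) (t j : ℕ) : c * 2^t ≠ 2*2^j + 1 := by
  intro h
  match t with
  | 0 =>
    simp at h
    rcases aux_pow2 j with h' | h' | h' | h' | h' <;> omega
  | (t+1) =>
    have h2 : 2 ∣ 2^(t+1) := dvd_pow_self 2 (by omega)
    have h3 : (1:ℕ) ≤ 2^j := Nat.one_le_two_pow
    rcases hc with rfl | rfl <;> omega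

lemma not_c_pred {c : ℕ} (hc : c = 11 ∨ c = 13) (t j : ℕ) : c * 2^t + 1 ≠ 2*2^j := by
  intro h
  match t with
  | 0 =>
    simp at h
    rcases aux_pow2 j with h' | h' | h' | h' | h' <;> omega
  | (t+1) =>
    have h2 : 2 ∣ 2^(t+1) := dvd_pow_self 2 (by omega)
    have h3 : (1:ℕ) ≤ 2^j := Nat.one_le_two_pow
    rcases hc with rfl | rfl <;> omega

lemma two_mul_pow (j : ℕ) : 2*2^j = 2^(j+1) := by rw [pow_succ]; ring

lemma gz_eq_one_iff (n : ℕ) : gz n = 1 ↔ ∃ t : ℕ, n + 1 = 11 * 2^t ∨ n + 1 = 13 * 2^t := by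
  induction n using Nat.strong_induction_on with
  | _ n ih =>
    match n with
    | 0 =>
      rw [gz_zero]
      constructor
      · omega
      · rintro ⟨t, h | h⟩ <;> (have : 1 ≤ 2^t := Nat.one_le_two_pow; omega)
    | (n+1) =>
      rcases Nat.even_or_odd n with ⟨m, hm⟩ | ⟨m, hm⟩
      · -- n+1 = 2m+1, odd
        have hn : n+1 = 2*m+1 := by omega
        rw [hn, gz_odd, ih m (by omega)]
        constructor
        · rintro ⟨t, h | h⟩
          · exact ⟨t+1, Or.inl (by rw [pow_succ]; omega)⟩
          · exact ⟨t+1, Or.inr (by rw [pow_succ]; omega)⟩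
        · rintro ⟨t, h | h⟩
          · match t with
            | 0 => simp at h; omega
            | (t+1) => exact ⟨t, Or.inl (by rw [pow_succ] at h; omega)⟩
          · match t with
            | 0 => simp at h; omega
            | (t+1) => exact ⟨t, Or.inr (by rw [pow_succ] at h; omega)⟩
      · -- n+1 = 2m+2, even
        have hn : n+1 = 2*m+2 := by omega
        rw [hn, gz_even]
        have hA := gz_nonneg (m+1)
        have hB := gz_nonneg m
        have hCpos : (1:ℤ) ≤ (bFun (m/2) : ℤ) := by exact_mod_cast bFun_pos (m/2)
        constructor
        · intro h
          have hC : bFun (m/2) = 1 ∨ bFun (m/2) = 2 := by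
            have : (bFun (m/2) : ℤ) = 1 ∨ (bFun (m/2) : ℤ) = 2 := by omega
            exact_mod_cast this
          rcases hC with hC | hC
          · -- bFun (m/2) = 1 : impossible
            exfalso
            obtain ⟨j, hj⟩ := (bFun_eq_one (m/2)).1 hC
            have hj1 : 1 ≤ 2^j := Nat.one_le_two_pow
            have hCz : (bFun (m/2) : ℤ) = 1 := by exact_mod_cast hC
            have hm2 : m = 2*2^j - 2 ∨ m = 2*2^j - 1 := by omega
            have hAB : gz (m+1) = 1 ∧ gz m = 0 ∨ gz (m+1) = 0 ∧ gz m = 1 := by omega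
            rcases hAB with ⟨hA1, hB0⟩ | ⟨hA0, hB1⟩
            · obtain ⟨t, ht⟩ := (ih (m+1) (by omega)).1 hA1
              -- m+2 = 11*2^t or 13*2^t ; m+2 = 2*2^j or 2*2^j + 1
              rcases ht with ht | ht
              · rcases hm2 with rfl | rfl
                · exact not_c_pow (c := 11) (Or.inl rfl) t (j+1) (by rw [← two_mul_pow]; omega)
                · exact not_c_succ (c := 11) (Or.inl rfl) t j (by omega)
              · rcases hm2 with rfl | rfl
                · exact not_c_pow (c := 13) (Or.inr rfl) t (j+1) (by rw [← two_mul_pow]; omega)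
                · exact not_c_succ (c := 13) (Or.inr rfl) t j (by omega)
            · obtain ⟨t, ht⟩ := (ih m (by omega)).1 hB1
              -- m+1 = 11*2^t or 13*2^t ; m+1 = 2*2^j - 1 or 2*2^j
              rcases ht with ht | ht
              · rcases hm2 with rfl | rfl
                · exact not_c_pred (c := 11) (Or.inl rfl) t j (by omega)
                · exact not_c_pow (c := 11) (Or.inl rfl) t (j+1) (by rw [← two_mul_pow]; omega)
              · rcases hm2 with rfl | rfl
                · exact not_c_pred (c := 13) (Or.inr rfl) t j (by omega)
                · exact not_c_pow (c := 13) (Or.inr rfl) t (j+1) (by rw [← two_mul_pow]; omega)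
          · -- bFun (m/2) = 2
            obtain ⟨j, hj⟩ := (bFun_eq_two (m/2)).1 hC
            have hj1 : 1 ≤ 2^j := Nat.one_le_two_pow
            have hCz : (bFun (m/2) : ℤ) = 2 := by exact_mod_cast hC
            have hA0 : gz (m+1) = 0 := by omega
            have hB0 : gz m = 0 := by omega
            have hm2 : m = 6*2^j - 2 ∨ m = 6*2^j - 1 := by omega
            match j with
            | 0 =>
              norm_num at hm2
              rcases hm2 with rfl | rfl
              · exact ⟨0, Or.inl (by omega)⟩
              · exact ⟨0, Or.inr (by omega)⟩
            | (j+1) =>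
              exfalso
              rcases hm2 with rfl | rfl
              · have := gz_six_sub_two j
                omega
              · have h6 : 6*2^(j+1) - 1 + 1 = 6*2^(j+1) := by
                  have : 1 ≤ 2^(j+1) := Nat.one_le_two_pow
                  omega
                have := gz_six j
                rw [← h6] at this
                omega
        · rintro ⟨t, ht | ht⟩
          · -- 2m+3 = 11*2^t : t = 0, m = 4
            match t with
            | 0 =>
              have hm4 : m = 4 := by omega
              subst hm4
              have h10 := gz_ten
              have he : (10:ℕ) = 2*4+2 := by norm_num
              rw [he, gz_even] at h10
              convert h10 using 2 <;> norm_num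
            | (t+1) =>
              exfalso
              have h2 : 2 ∣ 2^(t+1) := dvd_pow_self 2 (by omega)
              omega
          · match t with
            | 0 =>
              have hm5 : m = 5 := by omega
              subst hm5
              have h12 := gz_twelve
              have he : (12:ℕ) = 2*5+2 := by norm_num
              rw [he, gz_even] at h12
              convert h12 using 2 <;> norm_num
            | (t+1) =>
              exfalso
              have h2 : 2 ∣ 2^(t+1) := dvd_pow_self 2 (by omega)
              omega




/-- A nonnegative integer `n` satisfies `v(n) = 1` iff `n = 11·2^t − 1` or
`n = 13·2^t − 1` for some nonnegative integer `t`. -/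
theorem v_eq_one_iff (n : ℕ) :
    vFun n = 1 ↔ ∃ t : ℕ, n = 11 * 2 ^ t - 1 ∨ n = 13 * 2 ^ t - 1 := by
  have hnn := gz_nonneg n
  have key : vFun n = 1 ↔ gz n = 1 := by
    unfold vFun
    unfold gz at hnn ⊢
    omega
  rw [key, gz_eq_one_iff]
  constructor
  · rintro ⟨t, h | h⟩ <;> (have : 1 ≤ 2^t := Nat.one_le_two_pow; exact ⟨t, by omega⟩)
  · rintro ⟨t, h | h⟩ <;> (have : 1 ≤ 2^t := Nat.one_le_two_pow; exact ⟨t, by omega⟩)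
end

section
/- For a nonnegative integer n, a(n) = 0 if and only if n = 2^t − 1 for some nonnegative integer t (equivalently, n + 1 is a power of 2); in this case n has a unique hyperbinary expansion, consisting only of the digit 1. -/
/- ### Auxiliary lemmas -/

lemma wordVal_append (x u : List ℕ) :
    wordVal (x ++ u) = wordVal x * 2 ^ u.length + wordVal u := by
  induction x with
  | nil => simp [wordVal]
  | cons d x ih =>
      simp only [List.cons_append, wordVal, List.append_eq, List.length_append, ih, pow_add]
      ring

lemma wordVal_le (w : List ℕ) (h : ∀ d ∈ w, d ≤ 2) :
    wordVal w ≤ 2 ^ (w.length + 1) - 2 := by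
  induction w with
  | nil => simp [wordVal]
  | cons d r ih =>
      have hd : d ≤ 2 := h d (by simp)
      have hr := ih (fun e he => h e (by simp [he]))
      simp only [wordVal, List.length_cons]
      have h1 : d * 2 ^ r.length ≤ 2 * 2 ^ r.length :=
        Nat.mul_le_mul_right _ hd
      have h2 : (2:ℕ) ≤ 2 ^ (r.length + 1) := by
        calc (2:ℕ) = 2 ^ 1 := rfl
        _ ≤ 2 ^ (r.length + 1) := Nat.pow_le_pow_right (by norm_num) (by omega)
      have h3 : 2 ^ (r.length + 1 + 1) = 2 * 2 ^ r.length + 2 ^ (r.length + 1) := by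
        ring
      omega

lemma two_pow_le_wordVal (d : ℕ) (r : List ℕ) (hd : 1 ≤ d) :
    2 ^ r.length ≤ wordVal (d :: r) := by
  simp only [wordVal]
  have : 1 * 2 ^ r.length ≤ d * 2 ^ r.length := Nat.mul_le_mul_right _ hd
  omega

lemma wordVal_replicate_one (t : ℕ) :
    wordVal (List.replicate t 1) = 2 ^ t - 1 := by
  induction t with
  | zero => simp [wordVal]
  | succ t ih =>
      rw [List.replicate_succ]
      simp only [wordVal, List.length_replicate, ih]
      have : 1 ≤ 2 ^ t := Nat.one_le_two_pow
      have : 2 ^ (t + 1) = 2 ^ t + 2 ^ t := by ring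
      omega

lemma all_ones_of_val (w : List ℕ) (h : ∀ d ∈ w, d ≤ 2)
    (hv : wordVal w = 2 ^ w.length - 1) : w = List.replicate w.length 1 := by
  induction w with
  | nil => simp
  | cons d r ih =>
      have hd : d ≤ 2 := h d (by simp)
      have hr : ∀ e ∈ r, e ≤ 2 := fun e he => h e (by simp [he])
      have hmax := wordVal_le r hr
      have hone : 1 ≤ 2 ^ r.length := Nat.one_le_two_pow
      simp only [wordVal, List.length_cons] at hv ⊢
      have hpow : 2 ^ (r.length + 1) = 2 ^ r.length + 2 ^ r.length := by ring
      have hd1 : d = 1 := by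
        interval_cases d <;> omega
      subst hd1
      have : wordVal r = 2 ^ r.length - 1 := by omega
      rw [List.replicate_succ, ← ih hr this]

lemma wordVal_eq_zero (w : List ℕ) (hh : w.head? ≠ some 0)
    (hv : wordVal w = 0) : w = [] := by
  cases w with
  | nil => rfl
  | cons d r =>
      have hd : 1 ≤ d := by
        rcases Nat.eq_zero_or_pos d with h | h
        · exact absurd (by rw [h]; rfl) hh
        · exact h
      have := two_pow_le_wordVal d r hd
      have : 0 < 2 ^ r.length := Nat.pow_pos (by norm_num)
      omega

/-- In the power-of-two case, `Hyp` is the singleton of the all-ones word. -/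
lemma hyp_eq_singleton (t : ℕ) : Hyp (2 ^ t - 1) = {List.replicate t 1} := by
  ext w
  simp only [Set.mem_singleton_iff]
  constructor
  · rintro ⟨hd, hh, hv⟩
    cases w with
    | nil =>
        have : (2:ℕ) ^ t - 1 = 0 := by simpa [wordVal] using hv.symm
        have h1 : 1 ≤ 2 ^ t := Nat.one_le_two_pow
        have ht : 2 ^ t = 1 := by omega
        have : t = 0 := by
          by_contra h
          have : 2 ^ 1 ≤ 2 ^ t := Nat.pow_le_pow_right (by norm_num) (by omega)
          omega
        simp [this]
    | cons d r =>
        have hd1 : 1 ≤ d := by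
          rcases Nat.eq_zero_or_pos d with h | h
          · exact absurd (by rw [h]; rfl) hh
          · exact h
        have hlow := two_pow_le_wordVal d r hd1
        have hhigh := wordVal_le (d :: r) hd
        have h1 : 1 ≤ 2 ^ t := Nat.one_le_two_pow
        -- length = t
        have hlc : (d :: r).length = r.length + 1 := rfl
        have hlen : (d :: r).length = t := by
          rcases Nat.lt_trichotomy (d :: r).length t with h | h | h
          · -- value too small : wordVal ≤ 2^(len+1) - 2 < 2^t - 1
            have h2 : 2 ^ ((d :: r).length + 1) ≤ 2 ^ t :=
              Nat.pow_le_pow_right (by norm_num) (by omega)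
            have h3 : 2 ≤ 2 ^ ((d :: r).length + 1) := by
              calc (2:ℕ) = 2 ^ 1 := rfl
              _ ≤ _ := Nat.pow_le_pow_right (by norm_num) (by omega)
            omega
          · exact h
          · -- length > t : value ≥ 2^(len-1) ≥ 2^t > 2^t - 1
            have h2 : 2 ^ t ≤ 2 ^ r.length := Nat.pow_le_pow_right (by norm_num) (by omega)
            omega
        have := all_ones_of_val (d :: r) hd (by rw [hv, hlen])
        rw [this, hlen]
  · rintro rfl
    refine ⟨fun d hd => ?_, ?_, ?_⟩
    · have := List.eq_of_mem_replicate hd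
      omega
    · cases t with
      | zero => simp
      | succ t => simp [List.replicate_succ]
    · exact wordVal_replicate_one t

lemma arcs_eq_empty (t : ℕ) : arcs (2 ^ t - 1) = ∅ := by
  ext ⟨a, b⟩
  simp only [arcs, Set.mem_setOf_eq, Set.mem_empty_iff_false, iff_false]
  rintro ⟨ha, hb, hs⟩
  rw [hyp_eq_singleton] at ha
  have ha' : a = List.replicate t 1 := ha
  have h2 : (2 : ℕ) ∈ a := by
    rcases hs with (⟨x, y, hax, _⟩ | ⟨y, hay, _⟩) | ⟨x, y, hax, _⟩
    · rw [hax]; simp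
    · rw [hay]; simp
    · rw [hax]; simp
  rw [ha'] at h2
  have := List.eq_of_mem_replicate h2
  omega

/- ### The binary expansion -/

def bin : ℕ → List ℕ
  | 0 => []
  | (n + 1) => bin ((n + 1) / 2) ++ [(n + 1) % 2]
decreasing_by exact Nat.div_lt_self (Nat.succ_pos n) (by norm_num)

lemma wordVal_bin : ∀ n, wordVal (bin n) = n := by
  intro n
  induction n using Nat.strong_induction_on with
  | _ n ih =>
      match n with
      | 0 => simp [bin, wordVal]
      | (n + 1) =>
          rw [bin, wordVal_append]
          have := ih ((n + 1) / 2) (Nat.div_lt_self (Nat.succ_pos n) (by norm_num))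
          simp only [this, wordVal, List.length_nil, List.length_cons]
          have := Nat.div_add_mod (n + 1) 2
          simp only [pow_zero, pow_one, mul_one]
          omega

lemma bin_digits : ∀ n, ∀ d ∈ bin n, d ≤ 1 := by
  intro n
  induction n using Nat.strong_induction_on with
  | _ n ih =>
      match n with
      | 0 => simp [bin]
      | (n + 1) =>
          rw [bin]
          intro d hd
          rcases List.mem_append.mp hd with h | h
          · exact ih ((n + 1) / 2) (Nat.div_lt_self (Nat.succ_pos n) (by norm_num)) d h
          · simp only [List.mem_singleton] at h
            subst h
            omega

lemma bin_head : ∀ n, bin n = [] ∨ (bin n).head? = some 1 := by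
  intro n
  induction n using Nat.strong_induction_on with
  | _ n ih =>
      match n with
      | 0 => left; simp [bin]
      | (n + 1) =>
          right
          rw [bin]
          rcases ih ((n + 1) / 2) (Nat.div_lt_self (Nat.succ_pos n) (by norm_num)) with h | h
          · have hv := wordVal_bin ((n + 1) / 2)
            rw [h] at hv ⊢
            simp only [wordVal] at hv
            have h2 : (n + 1) / 2 = 0 := hv.symm
            have hn : n = 0 := by omega
            subst hn
            rfl
          · cases hb : bin ((n + 1) / 2) with
            | nil => rw [hb] at h; simp at h
            | cons e s =>
                rw [hb] at h
                simp only [List.head?_cons, Option.some.injEq] at h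
                simp [h]

lemma find_one_zero : ∀ w : List ℕ, (∀ d ∈ w, d ≤ 1) → w.head? = some 1 → (0 : ℕ) ∈ w →
    ∃ x y : List ℕ, w = x ++ 1 :: 0 :: y := by
  intro w
  induction w with
  | nil => simp
  | cons d r ih =>
      intro hdig hh hz
      have hd1 : d = 1 := by simpa using hh
      subst hd1
      have hz' : (0 : ℕ) ∈ r := by
        rcases List.mem_cons.mp hz with h | h
        · omega
        · exact h
      cases r with
      | nil => simp at hz'
      | cons e s =>
          rcases Nat.eq_zero_or_pos e with he | he
          · subst he
            exact ⟨[], s, rfl⟩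
          · have he1 : e = 1 := by
              have := hdig e (by simp)
              omega
            subst he1
            obtain ⟨x, y, hxy⟩ := ih (fun d hd => hdig d (by simp [List.mem_cons] at hd ⊢; tauto))
              rfl hz'
            exact ⟨1 :: x, y, by rw [List.cons_append, ← hxy]⟩

/- ### Main theorem -/

/-- `a(n) = 0` iff `n = 2^t − 1` for some nonnegative integer `t` (equivalently,
`n + 1` is a power of `2`); in this case `n` has a unique hyperbinary expansion,
consisting only of the digit `1`. -/
theorem a_eq_zero_iff (n : ℕ) :
    (aFun n = 0 ↔ ∃ t : ℕ, n + 1 = 2 ^ t) ∧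
    (aFun n = 0 → ∃ w : List ℕ, Hyp n = {w} ∧ ∀ d ∈ w, d = 1) := by
  have main : aFun n = 0 ↔ ∃ t : ℕ, n + 1 = 2 ^ t := by
    constructor
    · intro h0
      by_contra hnp
      push_neg at hnp
      -- n ≠ 0
      have hn0 : n ≠ 0 := by
        intro h; exact hnp 0 (by simp [h])
      -- binary expansion of n
      set w := bin n with hw
      have hval : wordVal w = n := wordVal_bin n
      have hdig : ∀ d ∈ w, d ≤ 1 := bin_digits n
      have hhead : w.head? = some 1 := by
        rcases bin_head n with h | h
        · exfalso; apply hn0; rw [← hval, hw, h]; rfl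
        · exact h
      -- there is a 0 digit
      have hz : (0 : ℕ) ∈ w := by
        by_contra hz
        apply hnp w.length
        have hall : ∀ d ∈ w, d = 1 := by
          intro d hd
          have := hdig d hd
          interval_cases d
          · exact absurd hd hz
          · rfl
        have hrep : w = List.replicate w.length 1 := List.eq_replicate_of_mem hall
        rw [← hval]
        conv_lhs => rw [hrep, wordVal_replicate_one]
        have : 1 ≤ 2 ^ w.length := Nat.one_le_two_pow
        omega
      obtain ⟨x, y, hxy⟩ := find_one_zero w hdig hhead hz
      -- build an arc
      have hbmem : w ∈ Hyp n := ⟨fun d hd => le_trans (hdig d hd) (by norm_num), by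
        rw [hhead]; simp, hval⟩
      have harc : ∃ a, (a, w) ∈ arcs n := by
        cases x with
        | nil =>
            refine ⟨2 :: y, ?_, hbmem, Or.inl (Or.inr ⟨y, rfl, by simpa using hxy⟩)⟩
            refine ⟨?_, by simp, ?_⟩
            · intro d hd
              rcases List.mem_cons.mp hd with h | h
              · omega
              · have : d ≤ 1 := hdig d (by rw [hxy]; simp [h])
                omega
            · rw [← hval, hxy]
              simp only [List.nil_append, wordVal, List.length_cons]
              ring
        | cons h x' =>
            refine ⟨(h :: x') ++ 0 :: 2 :: y, ?_, hbmem,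
              Or.inl (Or.inl ⟨h :: x', y, rfl, hxy⟩)⟩
            have hh1 : h = 1 := by
              rw [hxy] at hhead
              simpa using hhead
            refine ⟨?_, by simp [hh1], ?_⟩
            · intro d hd
              rcases List.mem_append.mp hd with hmem | hmem
              · have : d ≤ 1 := hdig d (by rw [hxy]; exact List.mem_append_left _ hmem)
                omega
              · rcases List.mem_cons.mp hmem with h | hmem2
                · omega
                · rcases List.mem_cons.mp hmem2 with h | h
                  · omega
                  · have : d ≤ 1 := hdig d (by rw [hxy]; simp [h])
                    omega
            · rw [← hval, hxy, wordVal_append, wordVal_append]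
              simp only [wordVal, List.length_cons]
              ring
      obtain ⟨a, ha⟩ := harc
      have hne : (arcs n).Nonempty := ⟨(a, w), ha⟩
      rw [aFun, Set.ncard_eq_zero (arcs_finite n)] at h0
      rw [h0] at hne
      exact Set.not_nonempty_empty hne
    · rintro ⟨t, ht⟩
      have hn : n = 2 ^ t - 1 := by omega
      rw [aFun, hn, arcs_eq_empty]
      simp
  refine ⟨main, fun h0 => ?_⟩
  obtain ⟨t, ht⟩ := main.mp h0
  have hn : n = 2 ^ t - 1 := by omega
  exact ⟨List.replicate t 1, by rw [hn]; exact hyp_eq_singleton t,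
    fun d hd => List.eq_of_mem_replicate hd⟩
end
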